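/- arXiv:gr-qc/0210078 — 4 statements merged into one kernel-verified Lean document; each statement's English description precedes it below -/
import Mathlib

section
/- The functions q₁(t) = (t+k)², q₂(t) = (t−k)/(t+k), π₁(t) = −2t/(t+k)², π₂(t) = −2(t+k), N(t) = ((t+k)/(t−k))^{1/2} satisfy the Hamilton evolution equations: q₁' = −N√q₂ π₂, π₁' = (1/2) N π₂² q₂^{3/2} q₁^{−2}, q₂' = −N√q₂(π₁ − π₂ q₁^{−1} q₂), and π₂' = (1/4) N q₂^{−1/2}(2(π₁π₂ − 2) − 3π₂² q₁^{−1} q₂), on any interval where t − k > 0. -/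
noncomputable section

/-- Scale factor `q₁` of the exact Bianchi III vacuum solution. -/
def q₁B (k t : ℝ) : ℝ := (t + k) ^ 2
/-- Scale factor `q₂` of the exact Bianchi III vacuum solution. -/
def q₂B (k t : ℝ) : ℝ := (t - k) / (t + k)
/-- Momentum `π₁` of the exact Bianchi III vacuum solution. -/
def π₁B (k t : ℝ) : ℝ := -2 * t / (t + k) ^ 2
/-- Momentum `π₂` of the exact Bianchi III vacuum solution. -/
def π₂B (k t : ℝ) : ℝ := -2 * (t + k)
/-- Lapse `N = q₂^{-1/2}` of the exact Bianchi III vacuum solution. -/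
def NB (k t : ℝ) : ℝ := Real.sqrt ((t + k) / (t - k))

/-!
The lapse is `N = q₂^{-1/2}` identically, so it cancels the powers of `√q₂` in the
right-hand sides, which become rational functions of `t` and `k` equal to the explicit
derivatives of `q₁, π₁, q₂, π₂`.
-/

theorem NB_eq_inv_sqrt_q₂B (k t : ℝ) : NB k t = (√(q₂B k t))⁻¹ := by
  rw [NB, q₂B, ← Real.sqrt_inv, inv_div]

theorem hasDerivAt_q₁B (k t : ℝ) : HasDerivAt (q₁B k) (2 * (t + k)) t :=
  (((hasDerivAt_id' t).add_const k).fun_pow 2).congr_deriv (by ring)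

theorem hasDerivAt_π₁B {k t : ℝ} (h : t + k ≠ 0) :
    HasDerivAt (π₁B k) (2 * (t - k) / (t + k) ^ 3) t :=
  (((hasDerivAt_id' t).const_mul (-2)).fun_div
    (((hasDerivAt_id' t).add_const k).fun_pow 2) (pow_ne_zero 2 h)).congr_deriv
    (by field_simp; ring)

theorem hasDerivAt_q₂B {k t : ℝ} (h : t + k ≠ 0) :
    HasDerivAt (q₂B k) (2 * k / (t + k) ^ 2) t :=
  (((hasDerivAt_id' t).sub_const k).fun_div ((hasDerivAt_id' t).add_const k) h).congr_deriv
    (by ring)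

theorem hasDerivAt_π₂B (k t : ℝ) : HasDerivAt (π₂B k) (-2) t :=
  (((hasDerivAt_id' t).add_const k).const_mul (-2)).congr_deriv (by ring)

/-- The exact Bianchi III vacuum solution satisfies the Hamilton evolution equations
generated by `H₀ = N√q₂(−π₁π₂ + (1/2)π₂² q₁⁻¹ q₂ + 2)`. -/
theorem bianchiIII_hamilton_equations (k t : ℝ) (ht : t - k > 0) (ht' : t + k > 0) :
    HasDerivAt (q₁B k) (-(NB k t) * Real.sqrt (q₂B k t) * π₂B k t) t ∧
    HasDerivAt (π₁B k)
      ((1 / 2) * NB k t * (π₂B k t) ^ 2 * (Real.sqrt (q₂B k t)) ^ 3 * ((q₁B k t) ^ 2)⁻¹) t ∧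
    HasDerivAt (q₂B k)
      (-(NB k t) * Real.sqrt (q₂B k t) * (π₁B k t - π₂B k t * (q₁B k t)⁻¹ * q₂B k t)) t ∧
    HasDerivAt (π₂B k)
      ((1 / 4) * NB k t * (Real.sqrt (q₂B k t))⁻¹ *
        (2 * (π₁B k t * π₂B k t - 2) - 3 * (π₂B k t) ^ 2 * (q₁B k t)⁻¹ * q₂B k t)) t := by
  have hq₂ : 0 < q₂B k t := div_pos ht ht'
  have hs : √(q₂B k t) ≠ 0 := (Real.sqrt_pos.mpr hq₂).ne'
  have hsq : √(q₂B k t) ^ 2 = q₂B k t := Real.sq_sqrt hq₂.le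
  rw [NB_eq_inv_sqrt_q₂B]
  refine ⟨(hasDerivAt_q₁B k t).congr_deriv ?_, (hasDerivAt_π₁B ht'.ne').congr_deriv ?_,
    (hasDerivAt_q₂B ht'.ne').congr_deriv ?_, (hasDerivAt_π₂B k t).congr_deriv ?_⟩
  · field_simp
    rw [π₂B]
    ring
  · field_simp
    rw [hsq]
    simp only [q₁B, q₂B, π₂B]
    field_simp
  · field_simp
    simp only [q₁B, q₂B, π₁B, π₂B]
    field_simp
    ring
  · field_simp
    rw [hsq]
    simp only [q₁B, q₂B, π₁B, π₂B]
    field_simp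
    ring
end
end

section
/- Let Q : ℝ → ℝ be twice differentiable satisfying Q'' + (4k/((t+k)²(t−k))) Q = 0 on an interval where t−k > 0 and t+k > 0. Then the general solution is Q(t) = ((t−k)/(t+k)) (C₁ + C₂(t − 4k²/(t−k) + 4k log(t−k))) for constants C₁, C₂; equivalently, for every C₁, C₂ this formula defines a solution, and the two basic solutions are linearly independent. -/
/-!
The two basic solutions are `u = (t - k)/(t + k)` and `v = u g` with `g` obtained by reduction
of order, `g' = 1/u²`; hence their Wronskian `u v' - u' v = u² g'` is identically `1`.
For any solution `y`, the Wronskians `W(y, u)`, `W(y, v)` are constant, and Cramer's rule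
`W(u, v) y = W(y, v) u - W(y, u) v` expresses `y` in the basis `u, v`. Linear independence
follows from the same identity evaluated at one point.
-/

open Filter Set Topology

noncomputable section

def wronskian (f f' g g' : ℝ → ℝ) (t : ℝ) : ℝ :=
  f t * g' t - f' t * g t

def IsSolutionOn (p : ℝ → ℝ) (s : Set ℝ) (y y' y'' : ℝ → ℝ) : Prop :=
  ∀ t ∈ s, HasDerivAt y (y' t) t ∧ HasDerivAt y' (y'' t) t ∧ y'' t + p t * y t = 0

namespace IsSolutionOn

variable {p y y' y'' z z' z'' : ℝ → ℝ} {s : Set ℝ}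

theorem hasDerivAt_wronskian (hy : IsSolutionOn p s y y' y'') (hz : IsSolutionOn p s z z' z'')
    {t : ℝ} (ht : t ∈ s) : HasDerivAt (wronskian y y' z z') 0 t := by
  obtain ⟨hy₁, hy₂, hy₃⟩ := hy t ht
  obtain ⟨hz₁, hz₂, hz₃⟩ := hz t ht
  refine ((hy₁.mul hz₂).sub (hy₂.mul hz₁)).congr_deriv ?_
  linear_combination y t * hz₃ - z t * hy₃

theorem wronskian_eq (hs : IsOpen s) (hs' : IsPreconnected s) (hy : IsSolutionOn p s y y' y'')
    (hz : IsSolutionOn p s z z' z'') {t₀ t : ℝ} (ht₀ : t₀ ∈ s) (ht : t ∈ s) :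
    wronskian y y' z z' t = wronskian y y' z z' t₀ :=
  hs.is_const_of_deriv_eq_zero hs'
    (fun _ hx ↦ (hy.hasDerivAt_wronskian hz hx).differentiableAt.differentiableWithinAt)
    (fun _ hx ↦ (hy.hasDerivAt_wronskian hz hx).deriv) ht ht₀

theorem deriv_deriv (hs : IsOpen s) (hy : IsSolutionOn p s y y' y'') {t : ℝ} (ht : t ∈ s) :
    deriv (deriv y) t = y'' t := by
  have hderiv : deriv y =ᶠ[𝓝 t] y' :=
    eventually_of_mem (hs.mem_nhds ht) fun x hx ↦ (hy x hx).1.deriv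
  rw [hderiv.deriv_eq, (hy t ht).2.1.deriv]

theorem exists_eq_linear_combination (hs : IsOpen s) (hs' : IsPreconnected s)
    {u u' u'' v v' v'' : ℝ → ℝ} (hu : IsSolutionOn p s u u' u'') (hv : IsSolutionOn p s v v' v'')
    {t₀ : ℝ} (ht₀ : t₀ ∈ s) (hW : wronskian u u' v v' t₀ ≠ 0) (hy : IsSolutionOn p s y y' y'') :
    ∃ a b : ℝ, ∀ t ∈ s, y t = a * u t + b * v t := by
  refine ⟨wronskian y y' v v' t₀ / wronskian u u' v v' t₀,
    -(wronskian y y' u u' t₀ / wronskian u u' v v' t₀), fun t ht ↦ ?_⟩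
  have hcramer : wronskian u u' v v' t * y t =
      wronskian y y' v v' t * u t - wronskian y y' u u' t * v t := by
    unfold wronskian
    ring
  rw [hy.wronskian_eq hs hs' hv ht₀ ht, hy.wronskian_eq hs hs' hu ht₀ ht,
    hu.wronskian_eq hs hs' hv ht₀ ht] at hcramer
  field_simp
  linear_combination hcramer

end IsSolutionOn

theorem eq_zero_of_wronskian_ne_zero {u u' v v' : ℝ → ℝ} {t₀ a b : ℝ}
    (hu : HasDerivAt u (u' t₀) t₀) (hv : HasDerivAt v (v' t₀) t₀)
    (hW : wronskian u u' v v' t₀ ≠ 0) (h : ∀ᶠ t in 𝓝 t₀, a * u t + b * v t = 0) :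
    a = 0 ∧ b = 0 := by
  have h₀ : a * u t₀ + b * v t₀ = 0 := h.self_of_nhds
  have h₁ : a * u' t₀ + b * v' t₀ = 0 :=
    ((hu.const_mul a).add (hv.const_mul b)).unique ((hasDerivAt_const t₀ 0).congr_of_eventuallyEq h)
  unfold wronskian at hW
  constructor
  · refine (mul_eq_zero.1 ?_).resolve_right hW
    linear_combination v' t₀ * h₀ - v t₀ * h₁
  · refine (mul_eq_zero.1 ?_).resolve_right hW
    linear_combination u t₀ * h₁ - u' t₀ * h₀

section ZeroMode

variable (k : ℝ)

def zeroModeRatio (t : ℝ) : ℝ :=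
  t - 4 * k ^ 2 / (t - k) + 4 * k * Real.log (t - k)

def zeroModeProfile (C₁ C₂ t : ℝ) : ℝ :=
  (t - k) / (t + k) * (C₁ + C₂ * zeroModeRatio k t)

def zeroModeProfileDeriv (C₁ C₂ t : ℝ) : ℝ :=
  2 * k / (t + k) ^ 2 * (C₁ + C₂ * zeroModeRatio k t) + C₂ * ((t + k) / (t - k))

def zeroModeProfileSecondDeriv (C₁ C₂ t : ℝ) : ℝ :=
  -(4 * k) / (t + k) ^ 3 * (C₁ + C₂ * zeroModeRatio k t)

variable {k} {t : ℝ}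

theorem hasDerivAt_zeroModeRatio (h₁ : t - k ≠ 0) :
    HasDerivAt (zeroModeRatio k) ((t + k) ^ 2 / (t - k) ^ 2) t := by
  have h := ((hasDerivAt_id t).sub ((hasDerivAt_const t (4 * k ^ 2)).div
      ((hasDerivAt_id t).sub_const k) h₁)).add
    ((((hasDerivAt_id t).sub_const k).log h₁).const_mul (4 * k))
  refine h.congr_deriv ?_
  simp only [id_eq]
  field_simp
  ring

theorem hasDerivAt_zeroModeProfile (C₁ C₂ : ℝ) (h₁ : t - k ≠ 0) (h₂ : t + k ≠ 0) :
    HasDerivAt (zeroModeProfile k C₁ C₂) (zeroModeProfileDeriv k C₁ C₂ t) t := by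
  have h := (((hasDerivAt_id t).sub_const k).div ((hasDerivAt_id t).add_const k) h₂).mul
    (((hasDerivAt_zeroModeRatio h₁).const_mul C₂).const_add C₁)
  refine h.congr_deriv ?_
  simp only [id_eq, Pi.div_apply]
  unfold zeroModeProfileDeriv
  field_simp
  ring

theorem hasDerivAt_zeroModeProfileDeriv (C₁ C₂ : ℝ) (h₁ : t - k ≠ 0) (h₂ : t + k ≠ 0) :
    HasDerivAt (zeroModeProfileDeriv k C₁ C₂) (zeroModeProfileSecondDeriv k C₁ C₂ t) t := by
  have h := (((hasDerivAt_const t (2 * k)).div (((hasDerivAt_id t).add_const k).pow 2)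
      (pow_ne_zero 2 h₂)).mul (((hasDerivAt_zeroModeRatio h₁).const_mul C₂).const_add C₁)).add
    ((((hasDerivAt_id t).add_const k).div ((hasDerivAt_id t).sub_const k) h₁).const_mul C₂)
  refine h.congr_deriv ?_
  simp only [id_eq, Pi.div_apply, Pi.pow_apply, Nat.cast_ofNat]
  unfold zeroModeProfileSecondDeriv
  field_simp
  ring

theorem sub_pos_and_add_pos_of_abs_lt (h : |k| < t) : 0 < t - k ∧ 0 < t + k := by
  obtain ⟨h₁, h₂⟩ := abs_lt.mp h
  constructor <;> linarith

variable (k)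

theorem isSolutionOn_zeroModeProfile (C₁ C₂ : ℝ) :
    IsSolutionOn (fun t ↦ 4 * k / ((t + k) ^ 2 * (t - k))) (Ioi |k|) (zeroModeProfile k C₁ C₂)
      (zeroModeProfileDeriv k C₁ C₂) (zeroModeProfileSecondDeriv k C₁ C₂) := by
  intro t ht
  obtain ⟨h₁, h₂⟩ := sub_pos_and_add_pos_of_abs_lt ht
  refine ⟨hasDerivAt_zeroModeProfile C₁ C₂ h₁.ne' h₂.ne',
    hasDerivAt_zeroModeProfileDeriv C₁ C₂ h₁.ne' h₂.ne', ?_⟩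
  unfold zeroModeProfileSecondDeriv zeroModeProfile
  field_simp
  ring

theorem wronskian_zeroModeProfile (h₁ : t - k ≠ 0) (h₂ : t + k ≠ 0) :
    wronskian (zeroModeProfile k 1 0) (zeroModeProfileDeriv k 1 0)
      (zeroModeProfile k 0 1) (zeroModeProfileDeriv k 0 1) t = 1 := by
  unfold wronskian zeroModeProfile zeroModeProfileDeriv
  field_simp
  ring

theorem zeroModeProfile_eq_add (C₁ C₂ t : ℝ) :
    zeroModeProfile k C₁ C₂ t = C₁ * zeroModeProfile k 1 0 t + C₂ * zeroModeProfile k 0 1 t := by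
  unfold zeroModeProfile
  ring

end ZeroMode

end

/-- General solution of the zero-mode harmonic perturbation wave equation
`Q'' + (4k/((t+k)²(t−k))) Q = 0` on `t > |k|`:
every solution is of the claimed form, every such formula is a solution,
and the two basic solutions are linearly independent. -/
theorem harmonic_zero_mode_general_solution (k : ℝ) :
    (∀ Q Q' Q'' : ℝ → ℝ,
      (∀ t : ℝ, |k| < t → HasDerivAt Q (Q' t) t) →
      (∀ t : ℝ, |k| < t → HasDerivAt Q' (Q'' t) t) →
      (∀ t : ℝ, |k| < t → Q'' t + (4 * k / ((t + k) ^ 2 * (t - k))) * Q t = 0) →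
      ∃ C₁ C₂ : ℝ, ∀ t : ℝ, |k| < t →
        Q t = ((t - k) / (t + k)) *
          (C₁ + C₂ * (t - 4 * k ^ 2 / (t - k) + 4 * k * Real.log (t - k)))) ∧
    (∀ C₁ C₂ : ℝ, ∀ t : ℝ, |k| < t →
      deriv (deriv (fun t : ℝ => ((t - k) / (t + k)) *
          (C₁ + C₂ * (t - 4 * k ^ 2 / (t - k) + 4 * k * Real.log (t - k))))) t
        + (4 * k / ((t + k) ^ 2 * (t - k))) *
          (((t - k) / (t + k)) *
            (C₁ + C₂ * (t - 4 * k ^ 2 / (t - k) + 4 * k * Real.log (t - k)))) = 0) ∧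
    (∀ a b : ℝ,
      (∀ t : ℝ, |k| < t →
        a * ((t - k) / (t + k))
          + b * (((t - k) / (t + k)) *
              (t - 4 * k ^ 2 / (t - k) + 4 * k * Real.log (t - k))) = 0) →
      a = 0 ∧ b = 0) := by
  have hsol := isSolutionOn_zeroModeProfile k
  have ht₀ : |k| + 1 ∈ Ioi |k| := lt_add_one |k|
  obtain ⟨h₁, h₂⟩ := sub_pos_and_add_pos_of_abs_lt ht₀
  have hW := ne_of_eq_of_ne (wronskian_zeroModeProfile k h₁.ne' h₂.ne') one_ne_zero
  refine ⟨fun Q Q' Q'' hQ hQ' hODE ↦ ?_, fun C₁ C₂ t ht ↦ ?_, fun a b hab ↦ ?_⟩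
  · obtain ⟨a, b, hQab⟩ := (hsol 1 0).exists_eq_linear_combination isOpen_Ioi isPreconnected_Ioi
      (hsol 0 1) ht₀ hW fun t ht ↦ ⟨hQ t ht, hQ' t ht, hODE t ht⟩
    exact ⟨a, b, fun t ht ↦ (hQab t ht).trans (zeroModeProfile_eq_add k a b t).symm⟩
  · have hODE := ((hsol C₁ C₂) t ht).2.2
    rw [← (hsol C₁ C₂).deriv_deriv isOpen_Ioi ht] at hODE
    exact hODE
  · refine eq_zero_of_wronskian_ne_zero (hsol 1 0 _ ht₀).1 (hsol 0 1 _ ht₀).1 hW ?_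
    filter_upwards [isOpen_Ioi.mem_nhds ht₀] with t ht
    simpa [zeroModeProfile, zeroModeRatio] using hab t ht
end

section
/- Fix λ > 0, m ∈ ℝ, and smooth positive background functions q₁, q₂, π₁, π₂, and set Σ = π₁/π₂ − q₂/q₁ + 2m²/λ², Δ₁ = Σ − 2m²/λ² = π₁/π₂ − q₂/q₁ and Δ₂ = (λ/√(2(λ²+2)))Σ = (λ/√(2(λ²+2)))(π₁/π₂ − q₂/q₁ + 2m²/λ²). Then the quantity Q = −Δ₁γ¹ − Δ₂γ² + γ³ − (2m/λ)γ⁴ is invariant under the even diffeomorphism-induced map γ¹ ↦ γ¹ − (q̇₁/N²)a₀ − λa₁, γ² ↦ γ² + √(2(λ²+2))a₁, γ³ ↦ γ³ − (q̇₂/N²)a₀ + 2m a₃, γ⁴ ↦ γ⁴ − m a₁ + λ a₃, for all a₀, a₁, a₃ ∈ ℝ, provided the background relation Δ₁ = q̇₂/q̇₁ holds (which follows from the background Hamilton equations). -/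
/-- The even gauge-invariant variable `Q = −Δ₁γ¹ − Δ₂γ² + γ³ − (2m/λ)γ⁴`, where
`Σ = π₁/π₂ − q₂/q₁ + 2m²/λ²`, `Δ₁ = Σ − 2m²/λ² = π₁/π₂ − q₂/q₁`, and
`Δ₂ = (λ/√(2(λ²+2))) Σ`, is invariant under the even diffeomorphism-induced map
`γ¹ ↦ γ¹ − (q̇₁/N²)a₀ − λa₁`, `γ² ↦ γ² + √(2(λ²+2))a₁`,
`γ³ ↦ γ³ − (q̇₂/N²)a₀ + 2m a₃`, `γ⁴ ↦ γ⁴ − m a₁ + λ a₃`,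
provided the background relation `Δ₁ = q̇₂/q̇₁` holds. -/
theorem even_gauge_invariance
    (lam m q1 q2 p1 p2 N dq1 dq2 a0 a1 a3 γ1 γ2 γ3 γ4 : ℝ)
    (hlam : 0 < lam) (hq1 : 0 < q1) (hq2 : 0 < q2) (hp2 : p2 ≠ 0)
    (hN : N ≠ 0) (hdq1 : dq1 ≠ 0)
    (hrel : p1 / p2 - q2 / q1 = dq2 / dq1) :
    -(p1 / p2 - q2 / q1) * (γ1 - dq1 / N ^ 2 * a0 - lam * a1)
      - (lam / Real.sqrt (2 * (lam ^ 2 + 2)) *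
          (p1 / p2 - q2 / q1 + 2 * m ^ 2 / lam ^ 2)) *
        (γ2 + Real.sqrt (2 * (lam ^ 2 + 2)) * a1)
      + (γ3 - dq2 / N ^ 2 * a0 + 2 * m * a3)
      - (2 * m / lam) * (γ4 - m * a1 + lam * a3)
    = -(p1 / p2 - q2 / q1) * γ1
      - (lam / Real.sqrt (2 * (lam ^ 2 + 2)) *
          (p1 / p2 - q2 / q1 + 2 * m ^ 2 / lam ^ 2)) * γ2
      + γ3 - (2 * m / lam) * γ4 := by
  have hs : Real.sqrt (2 * (lam ^ 2 + 2)) ≠ 0 := by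
    positivity
  rw [hrel]
  have hl : lam ≠ 0 := ne_of_gt hlam
  field_simp
  ring
end

section
/- Let k ∈ ℝ, λ, m ∈ ℝ, t₊ = t+k, t₋ = t−k. The substitution ζ(t) = √(t₊t₋/t) ψ(t) transforms the scalar wave equation ψ'' + (2t/(t₊t₋))ψ' + (λ²/(t₊t₋) + m² t₊²/t₋²)ψ = 0 into ζ'' + (1/t)ζ' + Z ζ = 0 with Z = (1/(t₊²t₋²))[m²t²((t+2k)² + 2k²) − (1/4 − λ²)t² + k²(km²(4t+k) − k²/(4t²) − λ² + 3/2)], on any interval where t > 0, t₊ > 0, t₋ > 0; i.e. ψ solves the first equation iff ζ solves the second. -/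
/-!
Write `ζ = w ψ` with `w' = a w`. For any coefficients `p, q`,
`ζ'' + p ζ' + q ζ = w (ψ'' + (2a + p) ψ' + (a' + a² + p a + q) ψ)`.
For `w = √(t₊t₋/t)` one has `a = (t² + k²) / (2t t₊t₋)`, so with `p = 1/t` the new first-order
coefficient `2a + 1/t` is `2t/(t₊t₋)`, and `Z` is exactly the potential for which the new
zeroth-order coefficient is `λ²/(t₊t₋) + m²t₊²/t₋²`. Since `w > 0`, the two equations are
equivalent.
-/

open Filter Topology

section GaugeTransform

variable {U : Set ℝ} {w a ψ : ℝ → ℝ} {a' t : ℝ}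

theorem hasDerivAt_mul_of_hasDerivAt_eq_mul (hw : HasDerivAt w (w t * a t) t)
    (hψ : DifferentiableAt ℝ ψ t) :
    HasDerivAt (fun s => w s * ψ s) (w t * (a t * ψ t + deriv ψ t)) t :=
  (hw.mul hψ.hasDerivAt).congr_deriv (by ring)

theorem deriv_deriv_mul_of_hasDerivAt_eq_mul (hU : IsOpen U) (ht : t ∈ U)
    (hw : ∀ s ∈ U, HasDerivAt w (w s * a s) s) (ha : HasDerivAt a a' t)
    (hψ : ContDiffOn ℝ 2 ψ U) :
    deriv (deriv fun s => w s * ψ s) t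
      = w t * (deriv (deriv ψ) t + 2 * a t * deriv ψ t + (a' + a t ^ 2) * ψ t) := by
  have hψ₁ : ∀ s ∈ U, DifferentiableAt ℝ ψ s := fun s hs =>
    (hψ.differentiableOn two_ne_zero s hs).differentiableAt (hU.mem_nhds hs)
  have hψ₂ : DifferentiableAt ℝ (deriv ψ) t :=
    ((hψ.deriv_of_isOpen hU (by norm_num)).differentiableOn one_ne_zero t ht).differentiableAt
      (hU.mem_nhds ht)
  have hζ' : deriv (fun s => w s * ψ s) =ᶠ[𝓝 t] fun s => w s * (a s * ψ s + deriv ψ s) :=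
    eventually_of_mem (hU.mem_nhds ht) fun s hs =>
      (hasDerivAt_mul_of_hasDerivAt_eq_mul (hw s hs) (hψ₁ s hs)).deriv
  rw [hζ'.deriv_eq]
  exact ((hw t ht).fun_mul
    ((ha.fun_mul (hψ₁ t ht).hasDerivAt).fun_add hψ₂.hasDerivAt)).deriv.trans (by ring)

theorem linear_ode_mul_of_hasDerivAt_eq_mul (hU : IsOpen U) (ht : t ∈ U)
    (hw : ∀ s ∈ U, HasDerivAt w (w s * a s) s) (ha : HasDerivAt a a' t)
    (hψ : ContDiffOn ℝ 2 ψ U) (p q : ℝ) :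
    deriv (deriv fun s => w s * ψ s) t + p * deriv (fun s => w s * ψ s) t + q * (w t * ψ t)
      = w t * (deriv (deriv ψ) t + (2 * a t + p) * deriv ψ t
          + (a' + a t ^ 2 + p * a t + q) * ψ t) := by
  have hψ₁ : DifferentiableAt ℝ ψ t :=
    (hψ.differentiableOn two_ne_zero t ht).differentiableAt (hU.mem_nhds ht)
  rw [deriv_deriv_mul_of_hasDerivAt_eq_mul hU ht hw ha hψ,
    (hasDerivAt_mul_of_hasDerivAt_eq_mul (hw t ht) hψ₁).deriv]
  ring

end GaugeTransform

namespace BianchiIII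

def region (k : ℝ) : Set ℝ := {t | 0 < t ∧ 0 < t + k ∧ 0 < t - k}

noncomputable def weight (k t : ℝ) : ℝ := √((t + k) * (t - k) / t)

noncomputable def weightLogDeriv (k t : ℝ) : ℝ := (t ^ 2 + k ^ 2) / (2 * t * ((t + k) * (t - k)))

variable {k t : ℝ}

theorem isOpen_region : IsOpen (region k) :=
  (isOpen_lt continuous_const continuous_id).inter
    ((isOpen_lt continuous_const (continuous_id.add continuous_const)).inter
      (isOpen_lt continuous_const (continuous_id.sub continuous_const)))

theorem weight_radicand_pos (ht : t ∈ region k) : 0 < (t + k) * (t - k) / t :=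
  div_pos (mul_pos ht.2.1 ht.2.2) ht.1

theorem weight_pos (ht : t ∈ region k) : 0 < weight k t :=
  Real.sqrt_pos.mpr (weight_radicand_pos ht)

theorem hasDerivAt_weight (ht : t ∈ region k) :
    HasDerivAt (weight k) (weight k t * weightLogDeriv k t) t := by
  have hg : HasDerivAt (fun s => (s + k) * (s - k) / s) ((t ^ 2 + k ^ 2) / t ^ 2) t :=
    ((((hasDerivAt_id t).add_const k).fun_mul ((hasDerivAt_id t).sub_const k)).div
      (hasDerivAt_id t) ht.1.ne').congr_deriv (by simp only [id]; ring)
  refine (hg.sqrt (weight_radicand_pos ht).ne').congr_deriv ?_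
  have hw : (t + k) * (t - k) = t * weight k t ^ 2 := by
    rw [weight, Real.sq_sqrt (weight_radicand_pos ht).le]
    field_simp [ht.1.ne']
  have hw₀ : weight k t ≠ 0 := (weight_pos ht).ne'
  change (t ^ 2 + k ^ 2) / t ^ 2 / (2 * weight k t) = weight k t * weightLogDeriv k t
  rw [weightLogDeriv, hw]
  field_simp [ht.1.ne']

theorem hasDerivAt_weightLogDeriv (ht : t ∈ region k) :
    HasDerivAt (weightLogDeriv k)
      (-(t ^ 4 + 4 * k ^ 2 * t ^ 2 - k ^ 4) / (2 * t ^ 2 * ((t + k) * (t - k)) ^ 2)) t := by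
  obtain ⟨ht₀, htp, htm⟩ := ht
  have hden : 2 * t * ((t + k) * (t - k)) ≠ 0 := by positivity
  have hnum : HasDerivAt (fun s => s ^ 2 + k ^ 2) (2 * t) t := by
    simpa using (hasDerivAt_pow 2 t).add_const (k ^ 2)
  have hden' : HasDerivAt (fun s => 2 * s * ((s + k) * (s - k))) (6 * t ^ 2 - 2 * k ^ 2) t :=
    (((hasDerivAt_id t).const_mul 2).fun_mul
      (((hasDerivAt_id t).add_const k).fun_mul ((hasDerivAt_id t).sub_const k))).congr_deriv
        (by simp only [id]; ring)
  refine (hnum.div hden' hden).congr_deriv ?_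
  field_simp
  ring

theorem two_mul_weightLogDeriv_add_inv (ht₀ : t ≠ 0) (htp : t + k ≠ 0) (htm : t - k ≠ 0) :
    2 * weightLogDeriv k t + 1 / t = 2 * t / ((t + k) * (t - k)) := by
  rw [weightLogDeriv]
  field_simp
  ring

theorem potential_eq (l m : ℝ) (ht₀ : t ≠ 0) (htp : t + k ≠ 0) (htm : t - k ≠ 0) :
    -(t ^ 4 + 4 * k ^ 2 * t ^ 2 - k ^ 4) / (2 * t ^ 2 * ((t + k) * (t - k)) ^ 2)
        + weightLogDeriv k t ^ 2 + 1 / t * weightLogDeriv k t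
        + (1 / ((t + k) ^ 2 * (t - k) ^ 2)) *
            (m ^ 2 * t ^ 2 * ((t + 2 * k) ^ 2 + 2 * k ^ 2)
              - (1 / 4 - l ^ 2) * t ^ 2
              + k ^ 2 * (k * m ^ 2 * (4 * t + k) - k ^ 2 / (4 * t ^ 2) - l ^ 2 + 3 / 2))
      = l ^ 2 / ((t + k) * (t - k)) + m ^ 2 * (t + k) ^ 2 / (t - k) ^ 2 := by
  rw [weightLogDeriv]
  field_simp
  ring

end BianchiIII

open BianchiIII

/-- On the exact Bianchi III vacuum background with parameter `k`, the substitution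
`ζ(t) = √(t₊t₋/t) ψ(t)` (with `t₊ = t+k`, `t₋ = t−k`) transforms the scalar wave
equation `ψ'' + (2t/(t₊t₋))ψ' + (λ²/(t₊t₋) + m²t₊²/t₋²)ψ = 0` into
`ζ'' + (1/t)ζ' + Z ζ = 0` with the stated coefficient `Z`, on the region where
`t > 0`, `t₊ > 0`, `t₋ > 0`. -/
theorem scalar_transform_general (k l m : ℝ) (ψ : ℝ → ℝ)
    (hψ : ContDiffOn ℝ 2 ψ {t : ℝ | 0 < t ∧ 0 < t + k ∧ 0 < t - k}) :
    (∀ t ∈ {t : ℝ | 0 < t ∧ 0 < t + k ∧ 0 < t - k},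
        deriv (deriv ψ) t + (2 * t / ((t + k) * (t - k))) * deriv ψ t
          + (l ^ 2 / ((t + k) * (t - k)) + m ^ 2 * (t + k) ^ 2 / (t - k) ^ 2) * ψ t
          = 0) ↔
    (∀ t ∈ {t : ℝ | 0 < t ∧ 0 < t + k ∧ 0 < t - k},
        deriv (deriv (fun t => Real.sqrt ((t + k) * (t - k) / t) * ψ t)) t
          + (1 / t) * deriv (fun t => Real.sqrt ((t + k) * (t - k) / t) * ψ t) t
          + ((1 / ((t + k) ^ 2 * (t - k) ^ 2)) *
              (m ^ 2 * t ^ 2 * ((t + 2 * k) ^ 2 + 2 * k ^ 2)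
                - (1 / 4 - l ^ 2) * t ^ 2
                + k ^ 2 * (k * m ^ 2 * (4 * t + k) - k ^ 2 / (4 * t ^ 2)
                    - l ^ 2 + 3 / 2))) *
            (Real.sqrt ((t + k) * (t - k) / t) * ψ t) = 0) := by
  refine forall₂_congr fun t ht => ?_
  have ht₀ : t ≠ 0 := ht.1.ne'
  have htp : t + k ≠ 0 := ht.2.1.ne'
  have htm : t - k ≠ 0 := ht.2.2.ne'
  rw [← two_mul_weightLogDeriv_add_inv ht₀ htp htm, ← potential_eq l m ht₀ htp htm,
    ← mul_eq_zero_iff_left (weight_pos ht).ne',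
    ← linear_ode_mul_of_hasDerivAt_eq_mul isOpen_region ht (fun s hs => hasDerivAt_weight hs)
      (hasDerivAt_weightLogDeriv ht) hψ]
  rfl
end
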